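/- Let U be a finite set, κ : U × U → ℝ with κ ≥ 0 and symmetric, and d : U × U → ℝ with d ≥ 0, symmetric, d(i,i) = 0, and d(i,k) ≤ d(i,j) + d(j,k) for all i,j,k ∈ U. Fix i ∈ U, a constant c₀ > 0, and Δ > 0. Define B(r) = { j ∈ U : d(i,j) < r }, vol(r) = c₀ + Σ_{{j,k} ⊆ B(r)} κ(j,k) d(j,k) + Σ_{j ∈ B(r), k ∈ U∖B(r)} κ(j,k)(r − d(i,j)), and ∂(r) = Σ_{j ∈ B(r), k ∈ U∖B(r)} κ(j,k). Then there exists r ∈ (0, Δ] such that Δ · ∂(r) ≤ vol(r) · log( vol(Δ) / vol(0) ). -/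

import Mathlib

/-!
If every radius `r ∈ (0, Δ]` had expansion `∂(r)/vol(r) > L/Δ` with `L = log(vol Δ / vol 0)`,
then `log ∘ vol` would grow by more than `L` on `[0, Δ]`. Between two consecutive distances
`d(i,j)` the ball is constant and `vol` grows linearly with slope `∂`; at a distance the ball
absorbs a sphere, which by the triangle inequality does not decrease `vol`. Hence on a gap
`(a, b]` we get `vol a ≤ vol b - ∂(b) (b - a)`, i.e. `log vol b - log vol a ≥ ∂(b) (b - a) / vol b`,
and summing over the gaps gives the contradiction.
-/

open scoped Classical

/-- The open ball of radius `r` around `i` with respect to `d`, inside the finite set `U`. -/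
noncomputable def openBall {U : Type*} [Fintype U] (d : U → U → ℝ) (i : U) (r : ℝ) :
    Finset U :=
  Finset.univ.filter fun j : U => d i j < r

/-- The volume of the open ball of radius `r` around `i`: a constant `c₀`, plus the
`κ`-weighted `d`-length of the (unordered) pairs inside the ball, plus the partial
lengths `κ j k * (r - d i j)` of the pairs crossing the boundary of the ball. -/
noncomputable def ballVol {U : Type*} [Fintype U] (κ d : U → U → ℝ) (i : U)
    (c₀ r : ℝ) : ℝ :=
  c₀ + (∑ j ∈ openBall d i r, ∑ k ∈ openBall d i r, κ j k * d j k) / 2 +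
    ∑ j ∈ openBall d i r, ∑ k ∈ (openBall d i r)ᶜ, κ j k * (r - d i j)

/-- The boundary of the open ball of radius `r` around `i`: the total `κ`-weight of
the pairs crossing the boundary of the ball. -/
noncomputable def ballBoundary {U : Type*} [Fintype U] (κ d : U → U → ℝ) (i : U)
    (r : ℝ) : ℝ :=
  ∑ j ∈ openBall d i r, ∑ k ∈ (openBall d i r)ᶜ, κ j k

open Finset

theorem mul_sub_lt_sub_of_increment_on_gaps (S : Finset ℝ) (g h : ℝ → ℝ) (c : ℝ)
    {a₀ b₀ : ℝ} (hab : a₀ < b₀) (hc : ∀ r ∈ Set.Ioc a₀ b₀, c < h r)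
    (hgap : ∀ a b, a₀ ≤ a → a < b → b ≤ b₀ → (∀ s ∈ S, s ∉ Set.Ioo a b) →
      h b * (b - a) ≤ g b - g a) :
    c * (b₀ - a₀) < g b₀ - g a₀ := by
  induction S using Finset.induction_on generalizing a₀ b₀ with
  | empty =>
    calc c * (b₀ - a₀) < h b₀ * (b₀ - a₀) :=
          mul_lt_mul_of_pos_right (hc b₀ ⟨hab, le_rfl⟩) (sub_pos.2 hab)
      _ ≤ g b₀ - g a₀ := hgap a₀ b₀ le_rfl hab le_rfl (by simp)
  | insert s S _ ih =>
    by_cases hs : s ∈ Set.Ioo a₀ b₀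
    · have hleft := ih hs.1 (fun r hr => hc r ⟨hr.1, hr.2.trans hs.2.le⟩)
        fun a b ha hab hb hS => hgap a b ha hab (hb.trans hs.2.le) <|
          forall_mem_insert _ _ _ |>.2 ⟨fun h => h.2.not_ge hb, hS⟩
      have hright := ih hs.2 (fun r hr => hc r ⟨hs.1.trans hr.1, hr.2⟩)
        fun a b ha hab hb hS => hgap a b (hs.1.le.trans ha) hab hb <|
          forall_mem_insert _ _ _ |>.2 ⟨fun h => h.1.not_ge ha, hS⟩
      linarith
    · exact ih hab hc fun a b ha hab hb hS => hgap a b ha hab hb <|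
        forall_mem_insert _ _ _ |>.2
          ⟨fun h => hs ⟨ha.trans_lt h.1, h.2.trans_le hb⟩, hS⟩

section Volume

variable {U : Type*} [Fintype U] (κ d : U → U → ℝ) (i : U) (c₀ : ℝ)

noncomputable def setVol (S : Finset U) (r : ℝ) : ℝ :=
  c₀ + (∑ j ∈ S, ∑ k ∈ S, κ j k * d j k) / 2 + ∑ j ∈ S, ∑ k ∈ Sᶜ, κ j k * (r - d i j)

theorem ballVol_eq_setVol (r : ℝ) : ballVol κ d i c₀ r = setVol κ d i c₀ (openBall d i r) r :=
  rfl

theorem setVol_eq_sub (S : Finset U) (a b : ℝ) :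
    setVol κ d i c₀ S a = setVol κ d i c₀ S b - (∑ j ∈ S, ∑ k ∈ Sᶜ, κ j k) * (b - a) := by
  have hsplit : ∀ j k, κ j k * (a - d i j) = κ j k * (b - d i j) - κ j k * (b - a) :=
    fun _ _ => by ring
  simp only [setVol, hsplit, sum_sub_distrib, sum_mul]
  ring

/-- A pair `(j, k)` from `B` to the sphere loses the crossing term `κ j k * (r - d i j)` but gains
its length `κ j k * d j k` (half from each orientation), and `r - d i j ≤ d j k` by the triangle
inequality. -/
theorem setVol_le_setVol_of_sphere (hκ0 : ∀ j k, 0 ≤ κ j k) (hκs : ∀ j k, κ j k = κ k j)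
    (hd0 : ∀ j k, 0 ≤ d j k) (hds : ∀ j k, d j k = d k j)
    (hdt : ∀ i j k : U, d i k ≤ d i j + d j k) {B S : Finset U} {r : ℝ} (hBS : B ⊆ S)
    (hsphere : ∀ k ∈ S \ B, d i k = r) :
    setVol κ d i c₀ B r ≤ setVol κ d i c₀ S r := by
  set E := S \ B
  have hcompl : Bᶜ \ Sᶜ = E := compl_sdiff_compl
  have hsplitS : ∀ f : U → ℝ, ∑ k ∈ S, f k = ∑ k ∈ E, f k + ∑ k ∈ B, f k :=
    fun f => (sum_sdiff hBS).symm
  have hsplitBc : ∀ f : U → ℝ, ∑ k ∈ Bᶜ, f k = ∑ k ∈ E, f k + ∑ k ∈ Sᶜ, f k := fun f => by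
    rw [← hcompl, sum_sdiff (compl_subset_compl.2 hBS)]
  have hEE : 0 ≤ ∑ j ∈ E, ∑ k ∈ E, κ j k * d j k :=
    sum_nonneg fun j _ => sum_nonneg fun k _ => mul_nonneg (hκ0 j k) (hd0 j k)
  have hEB : ∑ j ∈ E, ∑ k ∈ B, κ j k * d j k = ∑ j ∈ B, ∑ k ∈ E, κ j k * d j k := by
    rw [sum_comm]
    simp only [hκs, hds]
  have hESc : ∑ j ∈ E, ∑ k ∈ Sᶜ, κ j k * (r - d i j) = 0 :=
    sum_eq_zero fun j hj => by simp [hsphere j hj]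
  have hBE : ∑ j ∈ B, ∑ k ∈ E, κ j k * (r - d i j) ≤ ∑ j ∈ B, ∑ k ∈ E, κ j k * d j k :=
    sum_le_sum fun j _ => sum_le_sum fun k hk => mul_le_mul_of_nonneg_left
      (by linarith [hdt i j k, hsphere k hk]) (hκ0 j k)
  simp only [setVol, hsplitS, hsplitBc, sum_add_distrib]
  linarith

theorem c₀_le_ballVol (hκ0 : ∀ j k, 0 ≤ κ j k) (hd0 : ∀ j k, 0 ≤ d j k) (r : ℝ) :
    c₀ ≤ ballVol κ d i c₀ r := by
  have hin : 0 ≤ ∑ j ∈ openBall d i r, ∑ k ∈ openBall d i r, κ j k * d j k :=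
    sum_nonneg fun j _ => sum_nonneg fun k _ => mul_nonneg (hκ0 j k) (hd0 j k)
  have hcross : 0 ≤ ∑ j ∈ openBall d i r, ∑ k ∈ (openBall d i r)ᶜ, κ j k * (r - d i j) :=
    sum_nonneg fun j hj => sum_nonneg fun k _ => mul_nonneg (hκ0 j k)
      (sub_nonneg.2 (mem_filter.1 hj).2.le)
  unfold ballVol
  linarith

theorem ballVol_zero (hd0 : ∀ j k, 0 ≤ d j k) : ballVol κ d i c₀ 0 = c₀ := by
  have hempty : openBall d i 0 = ∅ :=
    filter_eq_empty_iff.2 fun j _ => (hd0 i j).not_gt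
  simp [ballVol, hempty]

theorem ballVol_le_sub_of_gap (hκ0 : ∀ j k, 0 ≤ κ j k) (hκs : ∀ j k, κ j k = κ k j)
    (hd0 : ∀ j k, 0 ≤ d j k) (hds : ∀ j k, d j k = d k j)
    (hdt : ∀ i j k : U, d i k ≤ d i j + d j k) {a b : ℝ} (hab : a < b)
    (hgap : ∀ j, d i j ∉ Set.Ioo a b) :
    ballVol κ d i c₀ a ≤ ballVol κ d i c₀ b - ballBoundary κ d i b * (b - a) := by
  set closedBall := univ.filter fun j => d i j ≤ a
  have hsub : openBall d i a ⊆ closedBall :=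
    monotone_filter_right _ fun j _ h => le_of_lt h
  have hsphere : ∀ k ∈ closedBall \ openBall d i a, d i k = a := fun k hk => by
    simp only [closedBall, openBall, mem_sdiff, mem_filter, mem_univ, true_and, not_lt] at hk
    exact le_antisymm hk.1 hk.2
  have hball : openBall d i b = closedBall := filter_congr fun j _ =>
    ⟨fun h => not_lt.1 fun h' => hgap j ⟨h', h⟩, fun h => h.trans_lt hab⟩
  rw [ballVol_eq_setVol, ballVol_eq_setVol, ballBoundary, hball, ← setVol_eq_sub]
  exact setVol_le_setVol_of_sphere κ d i c₀ hκ0 hκs hd0 hds hdt hsub hsphere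

theorem boundary_mul_div_le_log_sub_of_gap (hκ0 : ∀ j k, 0 ≤ κ j k)
    (hκs : ∀ j k, κ j k = κ k j) (hd0 : ∀ j k, 0 ≤ d j k) (hds : ∀ j k, d j k = d k j)
    (hdt : ∀ i j k : U, d i k ≤ d i j + d j k) (hc₀ : 0 < c₀) {a b : ℝ} (hab : a < b)
    (hgap : ∀ j, d i j ∉ Set.Ioo a b) :
    ballBoundary κ d i b * (b - a) / ballVol κ d i c₀ b ≤
      Real.log (ballVol κ d i c₀ b) - Real.log (ballVol κ d i c₀ a) := by
  have ha := hc₀.trans_le (c₀_le_ballVol κ d i c₀ hκ0 hd0 a)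
  have hb := hc₀.trans_le (c₀_le_ballVol κ d i c₀ hκ0 hd0 b)
  have hjump := ballVol_le_sub_of_gap κ d i c₀ hκ0 hκs hd0 hds hdt hab hgap
  calc ballBoundary κ d i b * (b - a) / ballVol κ d i c₀ b
      ≤ 1 - (ballVol κ d i c₀ b / ballVol κ d i c₀ a)⁻¹ := by
        rw [inv_div, le_sub_iff_add_le, ← add_div, div_le_one hb]
        linarith
    _ ≤ Real.log (ballVol κ d i c₀ b / ballVol κ d i c₀ a) :=
        Real.one_sub_inv_le_log_of_pos (div_pos hb ha)
    _ = _ := Real.log_div hb.ne' ha.ne'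

end Volume

theorem statement10_general {U : Type*} [Fintype U]
    (κ : U → U → ℝ) (hκ0 : ∀ j k : U, 0 ≤ κ j k) (hκs : ∀ j k : U, κ j k = κ k j)
    (d : U → U → ℝ) (hd0 : ∀ j k : U, 0 ≤ d j k) (hds : ∀ j k : U, d j k = d k j)
    (hdt : ∀ i j k : U, d i k ≤ d i j + d j k)
    (i : U) (c₀ : ℝ) (hc₀ : 0 < c₀) (Δ : ℝ) (hΔ : 0 < Δ) :
    ∃ r : ℝ, 0 < r ∧ r ≤ Δ ∧
      Δ * ballBoundary κ d i r ≤
        ballVol κ d i c₀ r * Real.log (ballVol κ d i c₀ Δ / ballVol κ d i c₀ 0) := by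
  by_contra! hexp
  set L := Real.log (ballVol κ d i c₀ Δ / ballVol κ d i c₀ 0)
  have hvol r : 0 < ballVol κ d i c₀ r := hc₀.trans_le (c₀_le_ballVol κ d i c₀ hκ0 hd0 r)
  have hgrowth := mul_sub_lt_sub_of_increment_on_gaps (univ.image (d i))
    (fun r => Real.log (ballVol κ d i c₀ r)) (fun r => ballBoundary κ d i r / ballVol κ d i c₀ r)
    (L / Δ) hΔ
    (fun r hr => by
      rw [div_lt_div_iff₀ hΔ (hvol r)]
      linarith [hexp r hr.1 hr.2])
    (fun a b _ hab _ hS => by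
      rw [div_mul_eq_mul_div]
      exact boundary_mul_div_le_log_sub_of_gap κ d i c₀ hκ0 hκs hd0 hds hdt hc₀ hab
        fun j => hS _ (mem_image_of_mem _ (mem_univ j)))
  rw [sub_zero, div_mul_cancel₀ _ hΔ.ne', ← Real.log_div (hvol Δ).ne' (hvol 0).ne'] at hgrowth
  exact lt_irrefl L hgrowth

/-- Sphere-growing lemma: there is a radius `r ∈ (0, Δ]` whose ball has expansion
`∂(r)/vol(r)` at most `(1/Δ) · log(vol(Δ)/vol(0))`. -/
theorem statement10 {U : Type*} [Fintype U] [DecidableEq U]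
    (κ : U → U → ℝ) (hκ0 : ∀ j k : U, 0 ≤ κ j k) (hκs : ∀ j k : U, κ j k = κ k j)
    (d : U → U → ℝ) (hd0 : ∀ j k : U, 0 ≤ d j k) (hds : ∀ j k : U, d j k = d k j)
    (hdd : ∀ j : U, d j j = 0) (hdt : ∀ i j k : U, d i k ≤ d i j + d j k)
    (i : U) (c₀ : ℝ) (hc₀ : 0 < c₀) (Δ : ℝ) (hΔ : 0 < Δ) :
    ∃ r : ℝ, 0 < r ∧ r ≤ Δ ∧
      Δ * ballBoundary κ d i r ≤
        ballVol κ d i c₀ r * Real.log (ballVol κ d i c₀ Δ / ballVol κ d i c₀ 0) :=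
  statement10_general κ hκ0 hκs d hd0 hds hdt i c₀ hc₀ Δ hΔ
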